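/- arXiv:2509.25105 — 3 statements merged into one kernel-verified Lean document; each statement's English description precedes it below -/
import Mathlib

section
/- Let T > 0, let r : [0,T] → ℝ be continuous, and let y, ŷ : [0,T] → ℝ be continuously differentiable functions satisfying y'(t) = y(t)² and ŷ'(t) = ŷ(t)² + r(t) for all t ∈ [0,T], with the same initial value y(0) = ŷ(0). Then the error e := y − ŷ satisfies, for every t ∈ [0,T], e(t)² ≤ ∫₀ᵗ r(s)² ds + ∫₀ᵗ (4|ŷ(s)| + 1) e(s)² ds + 2 ∫₀ᵗ |e(s)|³ ds. -/
open MeasureTheory Real Set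

/-! For `e = y - ŷ` one has `e' = e (e + 2ŷ) - r`, hence
`(e²)' = 2e³ + 4ŷe² - 2er ≤ 2|e|³ + 4|ŷ|e² + e² + r²`
by Young's inequality on the last term; integrating from `e(0) = 0` gives the estimate. -/

theorem sq_le_integral_of_two_mul_deriv_le {e e' φ : ℝ → ℝ} {a b : ℝ} (hab : a ≤ b)
    (ha : e a = 0) (he : ∀ s ∈ Icc a b, HasDerivAt e (e' s) s)
    (hφ : IntegrableOn φ (Icc a b)) (hle : ∀ s ∈ Ioo a b, 2 * e s * e' s ≤ φ s) :
    e b ^ 2 ≤ ∫ s in a..b, φ s := by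
  have hsq : ∀ s ∈ Icc a b, HasDerivAt (fun u => e u ^ 2) (2 * e s * e' s) s := fun s hs => by
    simpa using (he s hs).fun_pow 2
  have := intervalIntegral.sub_le_integral_of_hasDeriv_right_of_le hab
    (fun s hs => (hsq s hs).continuousAt.continuousWithinAt)
    (fun s hs => (hsq s (Ioo_subset_Icc_self hs)).hasDerivWithinAt) hφ hle
  simpa [ha] using this

theorem two_mul_sub_mul_sq_sub_sq_add_le (y ŷ r : ℝ) :
    2 * (y - ŷ) * (y ^ 2 - (ŷ ^ 2 + r)) ≤
      r ^ 2 + (4 * |ŷ| + 1) * (y - ŷ) ^ 2 + 2 * |y - ŷ| ^ 3 := by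
  set e := y - ŷ
  have hexpand : 2 * e * (y ^ 2 - (ŷ ^ 2 + r)) = 2 * e ^ 3 + 4 * ŷ * e ^ 2 - 2 * e * r := by
    simp only [e]; ring
  have hcube : e ^ 3 ≤ |e| ^ 3 := (le_abs_self _).trans (abs_pow e 3).le
  have hquad : ŷ * e ^ 2 ≤ |ŷ| * e ^ 2 :=
    mul_le_mul_of_nonneg_right (le_abs_self ŷ) (sq_nonneg e)
  have hyoung : -(2 * e * r) ≤ e ^ 2 + r ^ 2 := by nlinarith [sq_nonneg (e + r)]
  linarith

theorem ode_stability_estimate_general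
    (T : ℝ)
    (r y yhat : ℝ → ℝ)
    (hr : ContinuousOn r (Set.Icc 0 T))
    (hy : ∀ t ∈ Set.Icc (0:ℝ) T, HasDerivAt y ((y t) ^ 2) t)
    (hyhat : ∀ t ∈ Set.Icc (0:ℝ) T, HasDerivAt yhat ((yhat t) ^ 2 + r t) t)
    (hinit : y 0 = yhat 0) :
    ∀ t ∈ Set.Icc (0:ℝ) T,
      (y t - yhat t) ^ 2 ≤
        (∫ s in (0:ℝ)..t, (r s) ^ 2)
          + (∫ s in (0:ℝ)..t, (4 * |yhat s| + 1) * (y s - yhat s) ^ 2)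
          + 2 * ∫ s in (0:ℝ)..t, |y s - yhat s| ^ 3 := by
  rintro t ⟨ht0, htT⟩
  have hsub : Icc 0 t ⊆ Icc 0 T := Icc_subset_Icc le_rfl htT
  have hrc : ContinuousOn r (Icc 0 t) := hr.mono hsub
  have hyhatc : ContinuousOn yhat (Icc 0 t) :=
    fun s hs => (hyhat s (hsub hs)).continuousAt.continuousWithinAt
  have hec : ContinuousOn (fun s => y s - yhat s) (Icc 0 t) :=
    fun s hs => ((hy s (hsub hs)).sub (hyhat s (hsub hs))).continuousAt.continuousWithinAt
  have hr2 : IntervalIntegrable (fun s => r s ^ 2) volume 0 t :=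
    (hrc.pow 2).intervalIntegrable_of_Icc ht0
  have hquad : IntervalIntegrable (fun s => (4 * |yhat s| + 1) * (y s - yhat s) ^ 2) volume 0 t :=
    (((continuousOn_const.mul hyhatc.abs).add continuousOn_const).mul
      (hec.pow 2)).intervalIntegrable_of_Icc ht0
  have hcube : IntervalIntegrable (fun s => 2 * |y s - yhat s| ^ 3) volume 0 t :=
    ((hec.abs.pow 3).intervalIntegrable_of_Icc ht0).const_mul 2
  calc (y t - yhat t) ^ 2
      ≤ ∫ s in (0:ℝ)..t, ((r s) ^ 2 + (4 * |yhat s| + 1) * (y s - yhat s) ^ 2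
          + 2 * |y s - yhat s| ^ 3) :=
        sq_le_integral_of_two_mul_deriv_le ht0 (by simp [hinit])
          (fun s hs => (hy s (hsub hs)).sub (hyhat s (hsub hs)))
          ((intervalIntegrable_iff_integrableOn_Icc_of_le ht0).1 ((hr2.add hquad).add hcube))
          (fun s _ => two_mul_sub_mul_sq_sub_sq_add_le (y s) (yhat s) (r s))
    _ = _ := by
        rw [intervalIntegral.integral_add (hr2.add hquad) hcube,
          intervalIntegral.integral_add hr2 hquad, intervalIntegral.integral_const_mul]

/-- Stability estimate for the model ODE y' = y² compared with a perturbed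
solution ŷ' = ŷ² + r with the same initial datum. -/
theorem ode_stability_estimate
    (T : ℝ) (hT : 0 < T)
    (r y yhat : ℝ → ℝ)
    (hr : ContinuousOn r (Set.Icc 0 T))
    (hy : ∀ t ∈ Set.Icc (0:ℝ) T, HasDerivAt y ((y t) ^ 2) t)
    (hyhat : ∀ t ∈ Set.Icc (0:ℝ) T, HasDerivAt yhat ((yhat t) ^ 2 + r t) t)
    (hinit : y 0 = yhat 0) :
    ∀ t ∈ Set.Icc (0:ℝ) T,
      (y t - yhat t) ^ 2 ≤
        (∫ s in (0:ℝ)..t, (r s) ^ 2)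
          + (∫ s in (0:ℝ)..t, (4 * |yhat s| + 1) * (y s - yhat s) ^ 2)
          + 2 * ∫ s in (0:ℝ)..t, |y s - yhat s| ^ 3 :=
  ode_stability_estimate_general T r y yhat hr hy hyhat hinit
end

section
/- Let T > 0, let r : [0,T] → ℝ be continuous, and let y, ŷ : [0,T] → ℝ be continuously differentiable functions satisfying y'(t) = y(t)² and ŷ'(t) = ŷ(t)² + r(t) for all t ∈ [0,T], with y(0) = ŷ(0). Set A := ∫₀ᵀ r(s)² ds and M := exp(∫₀ᵀ (4|ŷ(s)| + 1) ds), and assume A > 0. If 16 (1 + T) (8AM)^{1/2} ≤ 1, then the error e := y − ŷ satisfies sup_{t ∈ [0,T]} e(t)² ≤ 2AM. -/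
open MeasureTheory Real Set

/-!
Along the solutions, `e² = (y - ŷ)²` satisfies `(e²)' ≤ (4|ŷ| + 1) e² + 2|e|³ + r²`. As long as
`e² ≤ 2AM` the cubic term is at most `2 √(2AM) e²`, so the variable-coefficient Grönwall
inequality gives `e² ≤ A M exp (2 √(2AM) T)`, and the smallness condition makes this
exponential factor less than `2`. The a priori bound `e² ≤ 2AM` therefore improves itself
strictly, and a continuity argument propagates it over all of `[0, T]`.
-/

theorem hasDerivAt_integral_of_continuousOn_Icc {g : ℝ → ℝ} {a b t : ℝ}
    (hg : ContinuousOn g (Icc a b)) (ht : t ∈ Ioo a b) :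
    HasDerivAt (fun u => ∫ s in a..u, g s) (g t) t :=
  intervalIntegral.integral_hasDerivAt_right
    ((hg.mono (Icc_subset_Icc_right ht.2.le)).intervalIntegrable_of_Icc ht.1.le)
    ((hg.mono Ioo_subset_Icc_self).stronglyMeasurableAtFilter isOpen_Ioo t ht)
    (hg.continuousAt (Icc_mem_nhds ht.1 ht.2))

theorem continuousOn_integral_of_continuousOn_Icc {g : ℝ → ℝ} {a b : ℝ} (hab : a ≤ b)
    (hg : ContinuousOn g (Icc a b)) :
    ContinuousOn (fun u => ∫ s in a..u, g s) (Icc a b) := by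
  rw [← uIcc_of_le hab] at hg ⊢
  exact intervalIntegral.continuousOn_primitive_interval (hg.integrableOn_uIcc (μ := volume))

/-- Grönwall's inequality with a variable coefficient. -/
theorem le_mul_exp_integral_of_deriv_le_mul_add {f f' c ρ : ℝ → ℝ} {a b : ℝ} (hab : a ≤ b)
    (hf : ContinuousOn f (Icc a b)) (hf' : ∀ t ∈ Ioo a b, HasDerivAt f (f' t) t)
    (hc : ContinuousOn c (Icc a b)) (hc₀ : ∀ t ∈ Icc a b, 0 ≤ c t)
    (hρ : ContinuousOn ρ (Icc a b)) (hρ₀ : ∀ t ∈ Icc a b, 0 ≤ ρ t)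
    (hle : ∀ t ∈ Ioo a b, f' t ≤ c t * f t + ρ t) :
    f b ≤ (f a + ∫ t in a..b, ρ t) * exp (∫ t in a..b, c t) := by
  set Φ : ℝ → ℝ := fun t => ∫ s in a..t, c s
  -- `e^{-Φ}` is an integrating factor, and `Φ ≥ 0` gives `(f' - c f) e^{-Φ} ≤ ρ e^{-Φ} ≤ ρ`.
  set h : ℝ → ℝ := fun t => f a + (∫ s in a..t, ρ s) - f t * exp (-Φ t)
  have hmono : MonotoneOn h (Icc a b) := by
    refine monotoneOn_of_hasDerivWithinAt_nonneg (convex_Icc a b)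
      (f' := fun t => ρ t - (f' t - c t * f t) * exp (-Φ t)) ?_ ?_ ?_
    · exact (continuousOn_const.add (continuousOn_integral_of_continuousOn_Icc hab hρ)).sub
        (hf.mul (continuousOn_integral_of_continuousOn_Icc hab hc).neg.rexp)
    · rw [interior_Icc]
      intro t ht
      have hderiv := ((hasDerivAt_const t (f a)).add
        (hasDerivAt_integral_of_continuousOn_Icc hρ ht)).sub
        ((hf' t ht).mul (hasDerivAt_integral_of_continuousOn_Icc hc ht).neg.exp)
      exact (hderiv.congr_deriv (by simp only [Pi.neg_apply, Φ]; ring)).hasDerivWithinAt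
    · rw [interior_Icc]
      intro t ht
      have hΦ : 0 ≤ Φ t :=
        intervalIntegral.integral_nonneg ht.1.le fun s hs => hc₀ s ⟨hs.1, hs.2.trans ht.2.le⟩
      have hexp : exp (-Φ t) ≤ 1 := exp_le_one_iff.2 (neg_nonpos.2 hΦ)
      have hρt := hρ₀ t (Ioo_subset_Icc_self ht)
      nlinarith [hle t ht, exp_pos (-Φ t)]
  have hab' := hmono (left_mem_Icc.2 hab) (right_mem_Icc.2 hab) hab
  simp only [h, Φ, intervalIntegral.integral_same, neg_zero, exp_zero] at hab'
  calc f b = f b * exp (-Φ b) * exp (Φ b) := by rw [mul_assoc, ← exp_add]; simp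
    _ ≤ _ := by gcongr; linarith

theorem ContinuousOn.forall_lt_of_bootstrap {f : ℝ → ℝ} {a b D : ℝ}
    (hf : ContinuousOn f (Icc a b)) (ha : f a < D)
    (hstep : ∀ t ∈ Icc a b, (∀ s ∈ Icc a t, f s ≤ D) → f t < D) :
    ∀ t ∈ Icc a b, f t < D := by
  by_contra! hbad
  obtain ⟨t₀, ht₀, hDt₀⟩ := hbad
  -- `c` is the first time at which `f` reaches `D`.
  set B := Icc a b ∩ f ⁻¹' Ici D
  have hB : BddBelow B := ⟨a, fun t ht => ht.1.1⟩
  obtain ⟨c, hcB, hcmin⟩ : ∃ c ∈ B, ∀ s ∈ B, c ≤ s :=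
    ⟨sInf B, (hf.preimage_isClosed_of_isClosed isClosed_Icc isClosed_Ici).csInf_mem
      ⟨t₀, ht₀, hDt₀⟩ hB, fun s hs => csInf_le hB hs⟩
  have hac : a < c := hcB.1.1.lt_of_ne <| by
    rintro rfl
    exact (hcB.2 : D ≤ f a).not_gt ha
  have hbefore : Ico a c ⊆ Icc a b ∩ f ⁻¹' Iic D := fun s hs => by
    have hs' : s ∈ Icc a b := ⟨hs.1, hs.2.le.trans hcB.1.2⟩
    exact ⟨hs', show f s ≤ D from le_of_not_ge fun hDs => (hcmin s ⟨hs', hDs⟩).not_gt hs.2⟩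
  have hupto : ∀ s ∈ Icc a c, f s ≤ D := by
    rw [← closure_Ico hac.ne]
    intro s hs
    exact ((hf.preimage_isClosed_of_isClosed isClosed_Icc isClosed_Iic).closure_subset_iff.2
      hbefore hs).2
  exact (hstep c hcB.1 hupto).not_ge hcB.2

theorem two_mul_sub_mul_sq_sub_le (y ŷ r : ℝ) :
    2 * (y - ŷ) * (y ^ 2 - (ŷ ^ 2 + r)) ≤
      (4 * |ŷ| + 1) * (y - ŷ) ^ 2 + 2 * |y - ŷ| ^ 3 + r ^ 2 := by
  have hcube : (y - ŷ) ^ 3 ≤ |y - ŷ| ^ 3 := by rw [← abs_pow]; exact le_abs_self _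
  nlinarith [mul_le_mul_of_nonneg_right (le_abs_self ŷ) (sq_nonneg (y - ŷ)), sq_nonneg (y - ŷ + r)]

theorem sq_sub_le_of_forall_abs_sub_le {T L b : ℝ} {r y yhat : ℝ → ℝ}
    (hr : ContinuousOn r (Icc 0 T))
    (hy : ∀ t ∈ Icc (0:ℝ) T, HasDerivAt y ((y t) ^ 2) t)
    (hyhat : ∀ t ∈ Icc (0:ℝ) T, HasDerivAt yhat ((yhat t) ^ 2 + r t) t)
    (hinit : y 0 = yhat 0) (hL : 0 ≤ L) (hb : b ∈ Icc 0 T)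
    (hbound : ∀ s ∈ Icc 0 b, |y s - yhat s| ≤ L) :
    (y b - yhat b) ^ 2 ≤
      (∫ s in 0..T, r s ^ 2) * exp (∫ s in 0..T, (4 * |yhat s| + 1)) * exp (2 * L * T) := by
  have hsub : Icc 0 b ⊆ Icc 0 T := Icc_subset_Icc_right hb.2
  have hyhatc : ContinuousOn yhat (Icc 0 T) := HasDerivAt.continuousOn hyhat
  have hcoeff : ContinuousOn (fun s => 4 * |yhat s| + 1) (Icc 0 T) :=
    (continuousOn_const.mul hyhatc.abs).add continuousOn_const
  have hgronwall := le_mul_exp_integral_of_deriv_le_mul_add (f := fun t => (y t - yhat t) ^ 2)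
    (c := fun t => 4 * |yhat t| + 1 + 2 * L) (ρ := fun t => r t ^ 2) hb.1
    (((HasDerivAt.continuousOn hy).sub hyhatc).pow 2 |>.mono hsub)
    (f' := fun t => 2 * (y t - yhat t) * (y t ^ 2 - (yhat t ^ 2 + r t)))
    (fun t ht => by
      have hsq := ((hy t (hsub (Ioo_subset_Icc_self ht))).sub
        (hyhat t (hsub (Ioo_subset_Icc_self ht)))).pow 2
      exact hsq.congr_deriv (by simp only [Pi.sub_apply]; ring))
    ((hcoeff.add continuousOn_const).mono hsub) (fun t _ => by positivity)
    ((hr.pow 2).mono hsub) (fun t _ => by positivity)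
    (fun t ht => by
      have hcube : |y t - yhat t| ^ 3 ≤ L * (y t - yhat t) ^ 2 :=
        calc |y t - yhat t| ^ 3 = |y t - yhat t| * (y t - yhat t) ^ 2 := by rw [← sq_abs]; ring
          _ ≤ L * (y t - yhat t) ^ 2 := by gcongr; exact hbound t (Ioo_subset_Icc_self ht)
      linarith [two_mul_sub_mul_sq_sub_le (y t) (yhat t) (r t)])
  have hρ : ∫ s in 0..b, r s ^ 2 ≤ ∫ s in 0..T, r s ^ 2 :=
    intervalIntegral.integral_mono_interval le_rfl hb.1 hb.2 (ae_of_all _ fun _ => sq_nonneg _)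
      ((hr.pow 2).intervalIntegrable_of_Icc (hb.1.trans hb.2))
  have hc : ∫ s in 0..b, (4 * |yhat s| + 1 + 2 * L) ≤
      (∫ s in 0..T, (4 * |yhat s| + 1)) + 2 * L * T := by
    rw [intervalIntegral.integral_add ((hcoeff.mono hsub).intervalIntegrable_of_Icc hb.1)
      intervalIntegrable_const, intervalIntegral.integral_const, smul_eq_mul, sub_zero]
    gcongr ?_ + ?_
    · exact intervalIntegral.integral_mono_interval le_rfl hb.1 hb.2
        (ae_of_all _ fun _ => by positivity) (hcoeff.intervalIntegrable_of_Icc (hb.1.trans hb.2))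
    · nlinarith [hb.2]
  simp only [hinit, sub_self, zero_pow two_ne_zero, zero_add] at hgronwall
  calc _ ≤ _ := hgronwall
    _ ≤ (∫ s in 0..T, r s ^ 2) * exp ((∫ s in 0..T, (4 * |yhat s| + 1)) + 2 * L * T) := by
      gcongr
      exact intervalIntegral.integral_nonneg (hb.1.trans hb.2) fun _ _ => sq_nonneg _
    _ = _ := by rw [exp_add]; ring

theorem ode_conditional_stability_general
    (T : ℝ)
    (r y yhat : ℝ → ℝ)
    (hr : ContinuousOn r (Set.Icc 0 T))
    (hy : ∀ t ∈ Set.Icc (0:ℝ) T, HasDerivAt y ((y t) ^ 2) t)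
    (hyhat : ∀ t ∈ Set.Icc (0:ℝ) T, HasDerivAt yhat ((yhat t) ^ 2 + r t) t)
    (hinit : y 0 = yhat 0)
    (A M : ℝ)
    (hA : A = ∫ s in (0:ℝ)..T, (r s) ^ 2)
    (hApos : 0 < A)
    (hM : M = Real.exp (∫ s in (0:ℝ)..T, (4 * |yhat s| + 1)))
    (hcond : 16 * (1 + T) * Real.sqrt (8 * A * M) ≤ 1) :
    sSup ((fun t => (y t - yhat t) ^ 2) '' Set.Icc 0 T) ≤ 2 * A * M := by
  have hAM : 0 < A * M := mul_pos hApos (hM ▸ exp_pos _)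
  set L := √(2 * A * M) with hL
  have hL₀ : 0 ≤ L := sqrt_nonneg _
  have hL2 : L ^ 2 = 2 * A * M := sq_sqrt (by linarith)
  have hexp : exp (2 * L * T) < 2 := by
    have h8 : √(8 * A * M) = 2 * L := by
      rw [hL, show 8 * A * M = 2 ^ 2 * (2 * A * M) by ring, sqrt_mul (by norm_num),
        sqrt_sq zero_le_two]
    rw [h8] at hcond
    rw [← lt_log_iff_exp_lt two_pos]
    nlinarith [log_two_gt_d9]
  have hsmall : ∀ t ∈ Icc 0 T, (y t - yhat t) ^ 2 < L ^ 2 := by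
    refine ContinuousOn.forall_lt_of_bootstrap
      (((HasDerivAt.continuousOn hy).sub (HasDerivAt.continuousOn hyhat)).pow 2)
      (by simp only [hinit, sub_self]; rw [hL2]; linarith) fun b hb hle => ?_
    calc (y b - yhat b) ^ 2 ≤ A * M * exp (2 * L * T) := by
          rw [hA, hM]
          exact sq_sub_le_of_forall_abs_sub_le hr hy hyhat hinit hL₀ hb
            fun s hs => abs_le_of_sq_le_sq (hle s hs) hL₀
      _ < L ^ 2 := by rw [hL2]; nlinarith
  refine Real.sSup_le ?_ (by linarith)
  rintro _ ⟨t, ht, rfl⟩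
  exact hL2 ▸ (hsmall t ht).le

/-- Conditional stability estimate for the model ODE y' = y² compared with a
perturbed solution ŷ' = ŷ² + r with the same initial datum. -/
theorem ode_conditional_stability
    (T : ℝ) (hT : 0 < T)
    (r y yhat : ℝ → ℝ)
    (hr : ContinuousOn r (Set.Icc 0 T))
    (hy : ∀ t ∈ Set.Icc (0:ℝ) T, HasDerivAt y ((y t) ^ 2) t)
    (hyhat : ∀ t ∈ Set.Icc (0:ℝ) T, HasDerivAt yhat ((yhat t) ^ 2 + r t) t)
    (hinit : y 0 = yhat 0)
    (A M : ℝ)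
    (hA : A = ∫ s in (0:ℝ)..T, (r s) ^ 2)
    (hApos : 0 < A)
    (hM : M = Real.exp (∫ s in (0:ℝ)..T, (4 * |yhat s| + 1)))
    (hcond : 16 * (1 + T) * Real.sqrt (8 * A * M) ≤ 1) :
    sSup ((fun t => (y t - yhat t) ^ 2) '' Set.Icc 0 T) ≤ 2 * A * M :=
  ode_conditional_stability_general T r y yhat hr hy hyhat hinit A M hA hApos hM hcond
end

section
/- Let v : ℝ³ → ℝ³ be a smooth 1-periodic vector field. Then ‖v‖_{L³} ≤ 22 ‖v‖_{W^{1,3/2}}, that is, ( ∫_{[0,1]³} |v(x)|³ dx )^{1/3} ≤ 22 ( ∫_{[0,1]³} |v(x)|^{3/2} dx + ∫_{[0,1]³} |∇v(x)|^{3/2} dx )^{2/3}. -/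
open MeasureTheory Real

noncomputable section

/-- Vectors in ℝ³. -/
abbrev V3 := Fin 3 → ℝ

/-- The unit cube [0,1]³. -/
def unitCube : Set V3 := Set.univ.pi fun _ => Set.Icc (0:ℝ) 1

/-- A vector field is 1-periodic if it is invariant under integer translations. -/
def IsPeriodic (v : V3 → V3) : Prop :=
  ∀ (x : V3) (k : Fin 3 → ℤ), v (x + (fun i => (k i : ℝ))) = v x

/-- Euclidean norm on ℝ³. -/
def evnorm (y : V3) : ℝ := Real.sqrt (∑ j, (y j) ^ 2)

/-- Partial derivative ∂ᵢ vⱼ of a vector field. -/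
def pd (v : V3 → V3) (i j : Fin 3) (x : V3) : ℝ := fderiv ℝ v x (Pi.single i 1) j

/-- Frobenius norm of the Jacobian of a vector field. -/
def jnorm (v : V3 → V3) (x : V3) : ℝ := Real.sqrt (∑ i, ∑ j, (pd v i j x) ^ 2)

open Function ENNReal

/-! ### Auxiliary definitions and lemmas -/

/-- The square of the Euclidean norm of `v`, as a sum of squares. -/
def fsq (v : V3 → V3) (x : V3) : ℝ := ∑ j, (v x j)^2

/-- The function controlling the line integrals: `|v|² + 2|v||∇v|`. -/
def gfun (v : V3 → V3) (y : V3) : ℝ := fsq v y + 2 * evnorm (v y) * jnorm v y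

lemma evnorm_nonneg (y : V3) : 0 ≤ evnorm y := Real.sqrt_nonneg _
lemma jnorm_nonneg (v : V3 → V3) (x : V3) : 0 ≤ jnorm v x := Real.sqrt_nonneg _
lemma fsq_nonneg (v : V3 → V3) (x : V3) : 0 ≤ fsq v x :=
  Finset.sum_nonneg fun _ _ => sq_nonneg _
lemma gfun_nonneg (v : V3 → V3) (y : V3) : 0 ≤ gfun v y := by
  have h1 := fsq_nonneg v y
  have h2 := evnorm_nonneg (v y)
  have h3 := jnorm_nonneg v y
  unfold gfun; positivity

lemma fsq_eq (v : V3 → V3) (x : V3) : fsq v x = evnorm (v x) ^ 2 :=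
  (Real.sq_sqrt (Finset.sum_nonneg fun _ _ => sq_nonneg _)).symm

lemma contDiff_comp_proj (v : V3 → V3) (hv : ContDiff ℝ (⊤ : ℕ∞) v) (j : Fin 3) :
    ContDiff ℝ (⊤ : ℕ∞) (fun x => v x j) :=
  (ContinuousLinearMap.proj j : V3 →L[ℝ] ℝ).contDiff.comp hv

lemma contDiff_fsq (v : V3 → V3) (hv : ContDiff ℝ (⊤ : ℕ∞) v) : ContDiff ℝ (⊤ : ℕ∞) (fsq v) :=
  ContDiff.sum fun j _ => (contDiff_comp_proj v hv j).pow 2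

lemma continuous_evnorm_comp (v : V3 → V3) (hv : ContDiff ℝ (⊤ : ℕ∞) v) :
    Continuous (fun x => evnorm (v x)) := by
  apply Continuous.sqrt
  exact continuous_finset_sum _ fun j _ => ((contDiff_comp_proj v hv j).continuous).pow 2

lemma continuous_pd (v : V3 → V3) (hv : ContDiff ℝ (⊤ : ℕ∞) v) (i j : Fin 3) :
    Continuous (pd v i j) := by
  have h1 : Continuous (fun x => fderiv ℝ v x) := hv.continuous_fderiv (by simp)
  have h2 : Continuous (fun x => fderiv ℝ v x (Pi.single i 1)) :=
    h1.clm_apply continuous_const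
  exact (continuous_apply j).comp h2

lemma continuous_jnorm (v : V3 → V3) (hv : ContDiff ℝ (⊤ : ℕ∞) v) : Continuous (jnorm v) := by
  apply Continuous.sqrt
  exact continuous_finset_sum _ fun i _ => continuous_finset_sum _ fun j _ =>
    (continuous_pd v hv i j).pow 2

lemma continuous_gfun (v : V3 → V3) (hv : ContDiff ℝ (⊤ : ℕ∞) v) : Continuous (gfun v) := by
  unfold gfun
  exact ((contDiff_fsq v hv).continuous).add
    (((continuous_const.mul (continuous_evnorm_comp v hv))).mul (continuous_jnorm v hv))

lemma hasFDerivAt_comp_proj (v : V3 → V3) (hv : ContDiff ℝ (⊤ : ℕ∞) v) (j : Fin 3) (x : V3) :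
    HasFDerivAt (fun x => v x j) ((ContinuousLinearMap.proj j).comp (fderiv ℝ v x)) x := by
  exact (ContinuousLinearMap.proj j).hasFDerivAt.comp x (hv.differentiable (by simp) x).hasFDerivAt

lemma hasFDerivAt_fsq (v : V3 → V3) (hv : ContDiff ℝ (⊤ : ℕ∞) v) (x : V3) :
    HasFDerivAt (fsq v)
      (∑ j, (2 * v x j) • ((ContinuousLinearMap.proj j).comp (fderiv ℝ v x))) x := by
  apply HasFDerivAt.fun_sum
  intro j _
  have h := hasFDerivAt_comp_proj v hv j x
  have h2 := h.fun_mul h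
  have : (fun x => v x j * v x j) = fun x => v x j ^ 2 := by ext y; ring
  rw [this] at h2
  refine h2.congr_fderiv ?_
  rw [two_mul, add_smul]

lemma cs_step (v : V3 → V3) (x : V3) (i : Fin 3) :
    |∑ j, v x j * pd v i j x| ≤ evnorm (v x) * jnorm v x := by
  have cs := Finset.sum_mul_sq_le_sq_mul_sq Finset.univ (fun j => v x j) (fun j => pd v i j x)
  have h1 : |∑ j, v x j * pd v i j x| = Real.sqrt ((∑ j, v x j * pd v i j x) ^ 2) :=
    (Real.sqrt_sq_eq_abs _).symm
  rw [h1]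
  calc Real.sqrt ((∑ j, v x j * pd v i j x) ^ 2)
      ≤ Real.sqrt ((∑ j, (v x j) ^ 2) * ∑ j, (pd v i j x) ^ 2) := Real.sqrt_le_sqrt cs
    _ = evnorm (v x) * Real.sqrt (∑ j, (pd v i j x) ^ 2) :=
        Real.sqrt_mul (Finset.sum_nonneg fun _ _ => sq_nonneg _) _
    _ ≤ evnorm (v x) * jnorm v x := by
        gcongr
        · exact Real.sqrt_nonneg _
        · apply Real.sqrt_le_sqrt
          exact Finset.single_le_sum (f := fun i' => ∑ j, (pd v i' j x) ^ 2)
            (fun i' _ => Finset.sum_nonneg fun _ _ => sq_nonneg _) (Finset.mem_univ i)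

lemma fderiv_fsq_apply_bound (v : V3 → V3) (hv : ContDiff ℝ (⊤ : ℕ∞) v) (x : V3) (i : Fin 3) :
    |fderiv ℝ (fsq v) x (Pi.single i 1)| ≤ 2 * evnorm (v x) * jnorm v x := by
  rw [(hasFDerivAt_fsq v hv x).fderiv]
  have happ : (∑ j, (2 * v x j) • ((ContinuousLinearMap.proj j).comp (fderiv ℝ v x)) :
      V3 →L[ℝ] ℝ) (Pi.single i 1) = 2 * ∑ j, v x j * pd v i j x := by
    rw [ContinuousLinearMap.sum_apply, Finset.mul_sum]
    congr 1; ext j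
    simp [pd]; ring
  rw [happ, abs_mul, abs_two, mul_assoc]
  gcongr
  exact cs_step v x i

/-- 1D Sobolev bound along a grid line. -/
lemma line_bound (v : V3 → V3) (hv : ContDiff ℝ (⊤ : ℕ∞) v) (x : V3) (hx : x ∈ unitCube) (i : Fin 3) :
    fsq v x ≤ ∫ t in Set.Icc (0:ℝ) 1, gfun v (update x i t) := by
  set φ : ℝ → ℝ := fun t => fsq v (update x i t) with hφ
  set d : ℝ → ℝ := fun t => fderiv ℝ (fsq v) (update x i t) (Pi.single i 1) with hd
  have hupd : Continuous (fun t : ℝ => update x i t) :=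
    (continuous_update i).comp (Continuous.prodMk_right x)
  have hderiv : ∀ t : ℝ, HasDerivAt φ (d t) t := by
    intro t
    have h1 : HasFDerivAt (fsq v) (fderiv ℝ (fsq v) (update x i t)) (update x i t) :=
      ((contDiff_fsq v hv).differentiable (by simp) _).hasFDerivAt
    exact h1.comp_hasDerivAt t (hasDerivAt_update x i t)
  have hφcont : Continuous φ := ((contDiff_fsq v hv).continuous).comp hupd
  have hdcont : Continuous d := by
    have h1 : Continuous (fun t => fderiv ℝ (fsq v) (update x i t)) :=
      ((contDiff_fsq v hv).continuous_fderiv (by simp)).comp hupd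
    exact h1.clm_apply continuous_const
  have habs : Continuous (fun t => |d t|) := hdcont.abs
  set K : ℝ := ∫ t in (0:ℝ)..1, |d t| with hK
  have step1 : ∀ a ∈ Set.Icc (0:ℝ) 1, φ (x i) ≤ φ a + K := by
    intro a ha
    have hxi : x i ∈ Set.Icc (0:ℝ) 1 := hx i (Set.mem_univ i)
    have ftc : ∫ t in a..(x i), d t = φ (x i) - φ a :=
      intervalIntegral.integral_eq_sub_of_hasDerivAt (fun t _ => hderiv t)
        (hdcont.intervalIntegrable a (x i))
    have h2 : φ (x i) - φ a ≤ |∫ t in a..(x i), d t| := by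
      rw [ftc]; exact le_abs_self _
    have h3 : |∫ t in a..(x i), d t| ≤ K := by
      rcases le_total a (x i) with hab | hab
      · calc |∫ t in a..(x i), d t| ≤ ∫ t in a..(x i), |d t| :=
              intervalIntegral.abs_integral_le_integral_abs hab
          _ ≤ K := by
              apply intervalIntegral.integral_mono_interval ha.1 hab hxi.2
              · filter_upwards with t using abs_nonneg _
              · exact habs.intervalIntegrable 0 1
      · rw [intervalIntegral.integral_symm, abs_neg]
        calc |∫ t in (x i)..a, d t| ≤ ∫ t in (x i)..a, |d t| :=
              intervalIntegral.abs_integral_le_integral_abs hab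
          _ ≤ K := by
              apply intervalIntegral.integral_mono_interval hxi.1 hab ha.2
              · filter_upwards with t using abs_nonneg _
              · exact habs.intervalIntegrable 0 1
    linarith
  have step2 : φ (x i) ≤ (∫ a in (0:ℝ)..1, φ a) + K := by
    have h1 : ∫ a in (0:ℝ)..1, (φ (x i) - K) ≤ ∫ a in (0:ℝ)..1, φ a := by
      apply intervalIntegral.integral_mono_on zero_le_one
        (intervalIntegrable_const) (hφcont.intervalIntegrable 0 1)
      intro a ha
      linarith [step1 a ha]
    simpa using h1
  have hdle : ∀ t, |d t| ≤ 2 * evnorm (v (update x i t)) * jnorm v (update x i t) :=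
    fun t => fderiv_fsq_apply_bound v hv (update x i t) i
  have step3 : (∫ a in (0:ℝ)..1, φ a) + K ≤ ∫ t in (0:ℝ)..1, gfun v (update x i t) := by
    have heq : (∫ a in (0:ℝ)..1, φ a) + K = ∫ t in (0:ℝ)..1, (φ t + |d t|) := by
      rw [intervalIntegral.integral_add (hφcont.intervalIntegrable 0 1)
        (habs.intervalIntegrable 0 1)]
    rw [heq]
    apply intervalIntegral.integral_mono_on zero_le_one
      ((hφcont.add habs).intervalIntegrable 0 1)
      (((continuous_gfun v hv).comp hupd).intervalIntegrable 0 1)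
    intro t _
    have := hdle t
    simp only [Function.comp_apply, gfun, hφ, Pi.add_apply]
    linarith
  have hupdxi : update x i (x i) = x := update_eq_self i x
  have key : fsq v x ≤ ∫ t in (0:ℝ)..1, gfun v (update x i t) := by
    have := step2.trans step3
    simpa only [hφ, hupdxi] using this
  rwa [intervalIntegral.integral_of_le zero_le_one, ← integral_Icc_eq_integral_Ioc] at key

lemma measurableSet_unitCube : MeasurableSet unitCube :=
  MeasurableSet.univ_pi fun _ => measurableSet_Icc

lemma isCompact_unitCube : IsCompact unitCube :=
  isCompact_univ_pi fun _ => isCompact_Icc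

lemma update_mem_unitCube {x : V3} (hx : x ∈ unitCube) (i : Fin 3) (t : ℝ) :
    update x i t ∈ unitCube ↔ t ∈ Set.Icc (0:ℝ) 1 := by
  constructor
  · intro h
    have := h i (Set.mem_univ i)
    simpa using this
  · intro ht j _
    rcases eq_or_ne j i with rfl | hj
    · simpa using ht
    · simp only [update_of_ne hj]
      exact hx j (Set.mem_univ j)

/-- The ENNReal-valued majorant function. -/
def Gf (v : V3 → V3) : V3 → ℝ≥0∞ := unitCube.indicator fun y => ENNReal.ofReal (gfun v y)

lemma measurable_Gf (v : V3 → V3) (hv : ContDiff ℝ (⊤ : ℕ∞) v) : Measurable (Gf v) :=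
  ((continuous_gfun v hv).measurable.ennreal_ofReal).indicator measurableSet_unitCube

lemma line_bound_lintegral (v : V3 → V3) (hv : ContDiff ℝ (⊤ : ℕ∞) v) (x : V3)
    (hx : x ∈ unitCube) (i : Fin 3) :
    ENNReal.ofReal (fsq v x) ≤ ∫⁻ t, Gf v (update x i t) := by
  have h1 : ∀ t : ℝ, Gf v (update x i t)
      = (Set.Icc (0:ℝ) 1).indicator (fun t => ENNReal.ofReal (gfun v (update x i t))) t := by
    intro t
    by_cases ht : t ∈ Set.Icc (0:ℝ) 1
    · rw [Set.indicator_of_mem ht, Gf,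
        Set.indicator_of_mem ((update_mem_unitCube hx i t).mpr ht)]
    · rw [Set.indicator_of_notMem ht, Gf, Set.indicator_of_notMem]
      exact fun hmem => ht ((update_mem_unitCube hx i t).mp hmem)
  calc ENNReal.ofReal (fsq v x)
      ≤ ENNReal.ofReal (∫ t in Set.Icc (0:ℝ) 1, gfun v (update x i t)) :=
        ENNReal.ofReal_le_ofReal (line_bound v hv x hx i)
    _ = ∫⁻ t in Set.Icc (0:ℝ) 1, ENNReal.ofReal (gfun v (update x i t)) := by
        apply ofReal_integral_eq_lintegral_ofReal
        · exact (((continuous_gfun v hv).comp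
            ((continuous_update i).comp (Continuous.prodMk_right x))).continuousOn).integrableOn_compact
            isCompact_Icc
        · filter_upwards with t using gfun_nonneg v _
    _ = ∫⁻ t, (Set.Icc (0:ℝ) 1).indicator (fun t => ENNReal.ofReal (gfun v (update x i t))) t :=
        (lintegral_indicator measurableSet_Icc _).symm
    _ = ∫⁻ t, Gf v (update x i t) := lintegral_congr fun t => (h1 t).symm

/-- Application of the grid-lines (Loomis–Whitney type) lemma. -/
lemma grid_step (v : V3 → V3) (hv : ContDiff ℝ (⊤ : ℕ∞) v) :
    (∫⁻ x in unitCube, ENNReal.ofReal (evnorm (v x) ^ 3))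
      ≤ (∫⁻ x in unitCube, ENNReal.ofReal (gfun v x)) ^ ((3:ℝ)/2) := by
  have hp : Real.HolderConjugate (Fintype.card (Fin 3)) (3/2) := by
    rw [Real.holderConjugate_iff]
    norm_num
  have key := MeasureTheory.lintegral_prod_lintegral_pow_le
    (fun _ : Fin 3 => (volume : Measure ℝ)) hp (measurable_Gf v hv)
  rw [← volume_pi] at key
  have hpt : ∀ x : V3, unitCube.indicator (fun x => ENNReal.ofReal (evnorm (v x) ^ 3)) x
      ≤ ∏ i : Fin 3, (∫⁻ t, Gf v (update x i t)) ^ ((1:ℝ)/((Fintype.card (Fin 3) : ℝ) - 1)) := by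
    intro x
    by_cases hx : x ∈ unitCube
    · rw [Set.indicator_of_mem hx]
      have he3 : ENNReal.ofReal (evnorm (v x) ^ 3)
          = (ENNReal.ofReal (fsq v x)) ^ ((3:ℝ)/2) := by
        rw [ENNReal.ofReal_rpow_of_nonneg (fsq_nonneg v x) (by norm_num), fsq_eq]
        congr 1
        rw [← Real.rpow_natCast (evnorm (v x)) 2, ← Real.rpow_natCast (evnorm (v x)) 3,
          ← Real.rpow_mul (evnorm_nonneg _)]
        norm_num
      have hprod : (ENNReal.ofReal (fsq v x)) ^ ((3:ℝ)/2)
          = ∏ _i : Fin 3, (ENNReal.ofReal (fsq v x)) ^ ((1:ℝ)/2) := by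
        rw [Finset.prod_const, ← ENNReal.rpow_natCast (_ ^ _) _, ← ENNReal.rpow_mul]
        norm_num
      rw [he3, hprod]
      apply Finset.prod_le_prod'
      intro i _
      have hline := line_bound_lintegral v hv x hx i
      have hexp : (1:ℝ)/((Fintype.card (Fin 3) : ℝ) - 1) = (1:ℝ)/2 := by norm_num
      rw [hexp]
      exact ENNReal.rpow_le_rpow hline (by norm_num)
    · rw [Set.indicator_of_notMem hx]
      exact zero_le'
  calc (∫⁻ x in unitCube, ENNReal.ofReal (evnorm (v x) ^ 3))
      = ∫⁻ x, unitCube.indicator (fun x => ENNReal.ofReal (evnorm (v x) ^ 3)) x :=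
        (lintegral_indicator measurableSet_unitCube _).symm
    _ ≤ ∫⁻ x, ∏ i : Fin 3,
          (∫⁻ t, Gf v (update x i t)) ^ ((1:ℝ)/((Fintype.card (Fin 3) : ℝ) - 1)) :=
        lintegral_mono hpt
    _ ≤ (∫⁻ x, Gf v x) ^ ((3:ℝ)/2) := key
    _ = (∫⁻ x in unitCube, ENNReal.ofReal (gfun v x)) ^ ((3:ℝ)/2) := by
        rw [Gf, lintegral_indicator measurableSet_unitCube]

lemma holder_pair (v : V3 → V3) (hv : ContDiff ℝ (⊤ : ℕ∞) v) (w : V3 → ℝ) (hw : Continuous w)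
    (hw0 : ∀ x, 0 ≤ w x) :
    ∫⁻ x in unitCube, ENNReal.ofReal (evnorm (v x)) * ENNReal.ofReal (w x)
      ≤ (∫⁻ x in unitCube, ENNReal.ofReal (evnorm (v x) ^ 3)) ^ ((1:ℝ)/3)
        * (∫⁻ x in unitCube, ENNReal.ofReal (w x ^ ((3:ℝ)/2))) ^ ((2:ℝ)/3) := by
  have hpq : Real.HolderConjugate 3 (3/2) := Real.holderConjugate_iff.mpr ⟨by norm_num, by norm_num⟩
  have hu : AEMeasurable (fun x => ENNReal.ofReal (evnorm (v x)))
      (volume.restrict unitCube) :=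
    ((continuous_evnorm_comp v hv).measurable.ennreal_ofReal).aemeasurable
  have hwm : AEMeasurable (fun x => ENNReal.ofReal (w x)) (volume.restrict unitCube) :=
    (hw.measurable.ennreal_ofReal).aemeasurable
  have H := ENNReal.lintegral_mul_le_Lp_mul_Lq (volume.restrict unitCube) hpq hu hwm
  have h1 : ∀ x : V3, ENNReal.ofReal (evnorm (v x)) ^ (3:ℝ)
      = ENNReal.ofReal (evnorm (v x) ^ 3) := by
    intro x
    rw [ENNReal.ofReal_rpow_of_nonneg (evnorm_nonneg _) (by norm_num)]
    congr 1
    rw [← Real.rpow_natCast (evnorm (v x)) 3]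
    norm_num
  have h2 : ∀ x : V3, ENNReal.ofReal (w x) ^ ((3:ℝ)/2)
      = ENNReal.ofReal (w x ^ ((3:ℝ)/2)) :=
    fun x => ENNReal.ofReal_rpow_of_nonneg (hw0 x) (by norm_num)
  calc ∫⁻ x in unitCube, ENNReal.ofReal (evnorm (v x)) * ENNReal.ofReal (w x)
      ≤ (∫⁻ x in unitCube, ENNReal.ofReal (evnorm (v x)) ^ (3:ℝ)) ^ ((1:ℝ)/3)
        * (∫⁻ x in unitCube, ENNReal.ofReal (w x) ^ ((3:ℝ)/2)) ^ ((1:ℝ)/(3/2)) := H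
    _ = (∫⁻ x in unitCube, ENNReal.ofReal (evnorm (v x) ^ 3)) ^ ((1:ℝ)/3)
        * (∫⁻ x in unitCube, ENNReal.ofReal (w x ^ ((3:ℝ)/2))) ^ ((2:ℝ)/3) := by
        rw [lintegral_congr fun x => h1 x, lintegral_congr fun x => h2 x]
        norm_num

/-- Sobolev embedding W^{1,3/2}(𝕋³) ↪ L³(𝕋³) with explicit constant 22. -/
theorem sobolev_embedding_L3
    (v : V3 → V3) (hv : ContDiff ℝ (⊤ : ℕ∞) v) (hvp : IsPeriodic v) :
    (∫ x in unitCube, evnorm (v x) ^ 3) ^ ((1:ℝ)/3)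
      ≤ 22 * ((∫ x in unitCube, evnorm (v x) ^ ((3:ℝ)/2))
              + ∫ x in unitCube, (jnorm v x) ^ ((3:ℝ)/2)) ^ ((2:ℝ)/3) := by
  have he : Continuous (fun x => evnorm (v x)) := continuous_evnorm_comp v hv
  have hj : Continuous (jnorm v) := continuous_jnorm v hv
  set IY := ∫ x in unitCube, evnorm (v x) ^ 3 with hIYdef
  set IA := ∫ x in unitCube, evnorm (v x) ^ ((3:ℝ)/2) with hIAdef
  set IB := ∫ x in unitCube, jnorm v x ^ ((3:ℝ)/2) with hIBdef
  set Y : ℝ≥0∞ := ∫⁻ x in unitCube, ENNReal.ofReal (evnorm (v x) ^ 3) with hYdef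
  set A : ℝ≥0∞ := ∫⁻ x in unitCube, ENNReal.ofReal (evnorm (v x) ^ ((3:ℝ)/2)) with hAdef
  set B : ℝ≥0∞ := ∫⁻ x in unitCube, ENNReal.ofReal (jnorm v x ^ ((3:ℝ)/2)) with hBdef
  -- the continuous functions are integrable on the compact cube
  have hrpow_cont : ∀ (f : V3 → ℝ), Continuous f →
      Continuous (fun x => f x ^ ((3:ℝ)/2)) := by
    intro f hf
    exact hf.rpow_const (fun x => Or.inr (by norm_num))
  have hIe3 : IntegrableOn (fun x => evnorm (v x) ^ 3) unitCube :=
    ((he.pow 3).continuousOn).integrableOn_compact isCompact_unitCube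
  have hIe32 : IntegrableOn (fun x => evnorm (v x) ^ ((3:ℝ)/2)) unitCube :=
    ((hrpow_cont _ he).continuousOn).integrableOn_compact isCompact_unitCube
  have hIj32 : IntegrableOn (fun x => jnorm v x ^ ((3:ℝ)/2)) unitCube :=
    ((hrpow_cont _ hj).continuousOn).integrableOn_compact isCompact_unitCube
  -- relate the real and ENNReal integrals
  have hY : ENNReal.ofReal IY = Y :=
    ofReal_integral_eq_lintegral_ofReal hIe3
      (Filter.Eventually.of_forall fun x => pow_nonneg (evnorm_nonneg _) 3)
  have hA : ENNReal.ofReal IA = A :=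
    ofReal_integral_eq_lintegral_ofReal hIe32
      (Filter.Eventually.of_forall fun x => Real.rpow_nonneg (evnorm_nonneg _) _)
  have hB : ENNReal.ofReal IB = B :=
    ofReal_integral_eq_lintegral_ofReal hIj32
      (Filter.Eventually.of_forall fun x => Real.rpow_nonneg (jnorm_nonneg _ _) _)
  have hYtop : Y ≠ ⊤ := by rw [← hY]; exact ENNReal.ofReal_ne_top
  have hAtop : A ≠ ⊤ := by rw [← hA]; exact ENNReal.ofReal_ne_top
  have hBtop : B ≠ ⊤ := by rw [← hB]; exact ENNReal.ofReal_ne_top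
  -- Hölder estimates
  have hH1 := holder_pair v hv (fun x => evnorm (v x)) he (fun x => evnorm_nonneg _)
  have hH2 := holder_pair v hv (jnorm v) hj (fun x => jnorm_nonneg v x)
  -- bound the gfun integral
  have hGbound : (∫⁻ x in unitCube, ENNReal.ofReal (gfun v x))
      ≤ Y ^ ((1:ℝ)/3) * (A ^ ((2:ℝ)/3) + 2 * B ^ ((2:ℝ)/3)) := by
    have hsplit : ∀ x : V3, ENNReal.ofReal (gfun v x)
        = ENNReal.ofReal (evnorm (v x)) * ENNReal.ofReal (evnorm (v x))
          + 2 * (ENNReal.ofReal (evnorm (v x)) * ENNReal.ofReal (jnorm v x)) := by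
      intro x
      have h1 : gfun v x = evnorm (v x) * evnorm (v x)
          + 2 * (evnorm (v x) * jnorm v x) := by
        rw [gfun, fsq_eq]; ring
      rw [h1, ENNReal.ofReal_add (mul_nonneg (evnorm_nonneg _) (evnorm_nonneg _))
        (mul_nonneg (by norm_num) (mul_nonneg (evnorm_nonneg _) (jnorm_nonneg _ _))),
        ENNReal.ofReal_mul (evnorm_nonneg _), ENNReal.ofReal_mul (by norm_num : (0:ℝ) ≤ 2),
        ENNReal.ofReal_mul (evnorm_nonneg _), ENNReal.ofReal_ofNat]
    calc (∫⁻ x in unitCube, ENNReal.ofReal (gfun v x))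
        = (∫⁻ x in unitCube, ENNReal.ofReal (evnorm (v x)) * ENNReal.ofReal (evnorm (v x)))
          + ∫⁻ x in unitCube,
              2 * (ENNReal.ofReal (evnorm (v x)) * ENNReal.ofReal (jnorm v x)) := by
          rw [← lintegral_add_left]
          · exact lintegral_congr hsplit
          · exact (he.measurable.ennreal_ofReal).mul (he.measurable.ennreal_ofReal)
      _ = (∫⁻ x in unitCube, ENNReal.ofReal (evnorm (v x)) * ENNReal.ofReal (evnorm (v x)))
          + 2 * ∫⁻ x in unitCube,
              ENNReal.ofReal (evnorm (v x)) * ENNReal.ofReal (jnorm v x) := by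
          rw [lintegral_const_mul' 2 _ (by norm_num)]
      _ ≤ (Y ^ ((1:ℝ)/3) * A ^ ((2:ℝ)/3))
          + 2 * (Y ^ ((1:ℝ)/3) * B ^ ((2:ℝ)/3)) := by
          exact add_le_add hH1 (mul_le_mul_right hH2 2)
      _ = Y ^ ((1:ℝ)/3) * (A ^ ((2:ℝ)/3) + 2 * B ^ ((2:ℝ)/3)) := by ring
  -- main chain
  set C : ℝ≥0∞ := A ^ ((2:ℝ)/3) + 2 * B ^ ((2:ℝ)/3) with hCdef
  have hmain : Y ≤ Y ^ ((1:ℝ)/2) * C ^ ((3:ℝ)/2) := by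
    calc Y ≤ (∫⁻ x in unitCube, ENNReal.ofReal (gfun v x)) ^ ((3:ℝ)/2) := grid_step v hv
      _ ≤ (Y ^ ((1:ℝ)/3) * C) ^ ((3:ℝ)/2) := by
          exact ENNReal.rpow_le_rpow hGbound (by norm_num)
      _ = Y ^ ((1:ℝ)/2) * C ^ ((3:ℝ)/2) := by
          rw [ENNReal.mul_rpow_of_nonneg _ _ (by norm_num : (0:ℝ) ≤ 3/2),
            ← ENNReal.rpow_mul]
          norm_num
  have hcancel : Y ^ ((1:ℝ)/3) ≤ C := by
    by_cases hY0 : Y = 0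
    · rw [hY0, ENNReal.zero_rpow_of_pos (by norm_num)]
      exact zero_le'
    · have h12 : Y ^ ((1:ℝ)/2) ≤ C ^ ((3:ℝ)/2) := by
        have hYsplit : Y = Y ^ ((1:ℝ)/2) * Y ^ ((1:ℝ)/2) := by
          rw [← ENNReal.rpow_add _ _ hY0 hYtop]
          norm_num
        have hmm : Y ^ ((1:ℝ)/2) * Y ^ ((1:ℝ)/2) ≤ Y ^ ((1:ℝ)/2) * C ^ ((3:ℝ)/2) := by
          rw [← hYsplit]; exact hmain
        exact (ENNReal.mul_le_mul_iff_right
          (by simp [ENNReal.rpow_eq_zero_iff, hY0, hYtop])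
          (ENNReal.rpow_ne_top_of_nonneg (by norm_num) hYtop)).mp hmm
      have := ENNReal.rpow_le_rpow h12 (by norm_num : (0:ℝ) ≤ 2/3)
      rw [← ENNReal.rpow_mul, ← ENNReal.rpow_mul] at this
      norm_num at this
      convert this using 2 <;> norm_num
  have hC3 : C ≤ 3 * (A + B) ^ ((2:ℝ)/3) := by
    have hA' : A ^ ((2:ℝ)/3) ≤ (A + B) ^ ((2:ℝ)/3) :=
      ENNReal.rpow_le_rpow le_self_add (by norm_num)
    have hB' : B ^ ((2:ℝ)/3) ≤ (A + B) ^ ((2:ℝ)/3) :=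
      ENNReal.rpow_le_rpow le_add_self (by norm_num)
    calc C = A ^ ((2:ℝ)/3) + 2 * B ^ ((2:ℝ)/3) := rfl
      _ ≤ (A + B) ^ ((2:ℝ)/3) + 2 * (A + B) ^ ((2:ℝ)/3) :=
          add_le_add hA' (mul_le_mul_right hB' 2)
      _ = 3 * (A + B) ^ ((2:ℝ)/3) := by ring
  have hfinal : Y ^ ((1:ℝ)/3) ≤ 3 * (A + B) ^ ((2:ℝ)/3) := hcancel.trans hC3
  -- convert back to real numbers
  have hABtop : A + B ≠ ⊤ := ENNReal.add_ne_top.mpr ⟨hAtop, hBtop⟩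
  have hRHStop : (3 : ℝ≥0∞) * (A + B) ^ ((2:ℝ)/3) ≠ ⊤ := by
    apply ENNReal.mul_ne_top (by norm_num)
    exact ENNReal.rpow_ne_top_of_nonneg (by norm_num) hABtop
  have htoReal := ENNReal.toReal_mono hRHStop hfinal
  have hIY0 : 0 ≤ IY := integral_nonneg fun x => pow_nonneg (evnorm_nonneg _) 3
  have hIA0 : 0 ≤ IA := integral_nonneg fun x => Real.rpow_nonneg (evnorm_nonneg _) _
  have hIB0 : 0 ≤ IB := integral_nonneg fun x => Real.rpow_nonneg (jnorm_nonneg _ _) _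
  have hL : (Y ^ ((1:ℝ)/3)).toReal = IY ^ ((1:ℝ)/3) := by
    rw [← ENNReal.toReal_rpow, ← hY, ENNReal.toReal_ofReal hIY0]
  have hR : ((3 : ℝ≥0∞) * (A + B) ^ ((2:ℝ)/3)).toReal = 3 * (IA + IB) ^ ((2:ℝ)/3) := by
    rw [ENNReal.toReal_mul, ← ENNReal.toReal_rpow, ← hA, ← hB,
      ← ENNReal.ofReal_add hIA0 hIB0, ENNReal.toReal_ofReal (by linarith)]
    norm_num
  rw [hL, hR] at htoReal
  have hpow0 : 0 ≤ (IA + IB) ^ ((2:ℝ)/3) := Real.rpow_nonneg (by linarith) _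
  linarith
end
end
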